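/- Let c ≥ 1 be a real number. Assume E[‖A₁‖^c] < 1 and E[‖B₁‖^c] < ∞. Then the random series U := Σ_{k=0}^{∞} (A₁ A₂ ⋯ A_k) B_{k+1} converges absolutely almost surely and E[‖U‖^c] < ∞. -/

import Mathlib

open MeasureTheory ProbabilityTheory Filter
open scoped NNReal Topology

/-- The ordered composition `A s ω ∘ A (s+1) ω ∘ ⋯ ∘ A (s+k-1) ω` of random continuous linear
maps on Euclidean space (the identity when `k = 0`). -/
noncomputable def fwdProd {Ω : Type*} {q : ℕ}
    (A : ℕ → Ω → (EuclideanSpace ℝ (Fin q) →L[ℝ] EuclideanSpace ℝ (Fin q)))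
    (s k : ℕ) (ω : Ω) : EuclideanSpace ℝ (Fin q) →L[ℝ] EuclideanSpace ℝ (Fin q) :=
  ((List.range k).map (fun i => A (s + i) ω)).prod

/-! The `k`-th term is bounded by `‖A₁‖ ⋯ ‖A_k‖ ‖B_{k+1}‖`, a product of independent factors,
so its `L^c` norm is at most `‖A₁‖_c ^ k ‖B₁‖_c` with `‖A₁‖_c < 1`. The `L^c` norms of the terms
are therefore summable, and completeness of `L^c` gives both the almost sure absolute convergence
and `U ∈ L^c`. -/

open Finset
open scoped ENNReal

namespace MeasureTheory

variable {X E : Type*} {_ : MeasurableSpace X} {μ : Measure X} [NormedAddCommGroup E]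
  [CompleteSpace E]

theorem memLp_tsum_of_tsum_eLpNorm_ne_top {ι : Type*} [Countable ι] {p : ℝ≥0∞}
    [Fact (1 ≤ p)] {f : ι → X → E} (hf : ∀ n, AEStronglyMeasurable (f n) μ)
    (h'f : ∑' n, eLpNorm (f n) p μ ≠ ∞) :
    MemLp (fun x ↦ ∑' n, f n x) p μ := by
  have hmem (n : ι) : MemLp (f n) p μ :=
    ⟨hf n, (ENNReal.le_tsum n).trans_lt h'f.lt_top⟩
  have hsum : ∑' n, ‖(hmem n).toLp‖ₑ ≠ ∞ := by
    simpa only [Lp.enorm_toLp] using h'f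
  refine (Lp.memLp (∑' n, (hmem n).toLp)).ae_eq ?_
  filter_upwards [Lp.coeFn_tsum hsum, ae_all_iff.2 fun n ↦ (hmem n).coeFn_toLp] with x hx hn
  simp only [hx, hn]

end MeasureTheory

section fwdProd

variable {Ω : Type*} {q : ℕ}
  (A : ℕ → Ω → (EuclideanSpace ℝ (Fin q) →L[ℝ] EuclideanSpace ℝ (Fin q)))

@[simp]
theorem fwdProd_zero (s : ℕ) (ω : Ω) : fwdProd A s 0 ω = 1 := by
  simp [fwdProd]

theorem fwdProd_succ (s k : ℕ) (ω : Ω) :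
    fwdProd A s (k + 1) ω = fwdProd A s k ω * A (s + k) ω := by
  simp [fwdProd, List.range_succ]

theorem measurable_fwdProd
    [MeasurableSpace Ω]
    [MeasurableSpace (EuclideanSpace ℝ (Fin q) →L[ℝ] EuclideanSpace ℝ (Fin q))]
    [BorelSpace (EuclideanSpace ℝ (Fin q) →L[ℝ] EuclideanSpace ℝ (Fin q))]
    {s : ℕ} (hA : ∀ i, Measurable (A (s + i))) (k : ℕ) : Measurable (fwdProd A s k) := by
  induction k with
  | zero => exact (funext (fwdProd_zero A s)).symm ▸ measurable_const
  | succ k ih => exact (funext (fwdProd_succ A s k)).symm ▸ ih.mul (hA k)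

theorem enorm_fwdProd_apply_le (s k : ℕ) (ω : Ω) (v : EuclideanSpace ℝ (Fin q)) :
    ‖fwdProd A s k ω v‖ₑ ≤ (∏ i ∈ range k, ‖A (s + i) ω‖ₑ) * ‖v‖ₑ := by
  induction k generalizing v with
  | zero => simp
  | succ k ih =>
    calc ‖fwdProd A s (k + 1) ω v‖ₑ ≤ (∏ i ∈ range k, ‖A (s + i) ω‖ₑ) * ‖A (s + k) ω v‖ₑ := by
          rw [fwdProd_succ]; exact ih _
      _ ≤ (∏ i ∈ range (k + 1), ‖A (s + i) ω‖ₑ) * ‖v‖ₑ := by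
          rw [prod_range_succ, mul_assoc]; gcongr; exact (A (s + k) ω).le_opENorm v

end fwdProd

theorem lintegral_prod_fst_mul_snd_of_iIndepFun_of_identDistrib {Ω α β : Type*}
    [MeasurableSpace Ω] [MeasurableSpace α] [MeasurableSpace β] {μ : Measure Ω} {X : ℕ → Ω → α × β}
    (hX : iIndepFun X μ) (hXm : ∀ i, Measurable (X i))
    (hident : ∀ i, IdentDistrib (X i) (X 0) μ μ) {φ : α → ℝ≥0∞} {ψ : β → ℝ≥0∞}
    (hφ : Measurable φ) (hψ : Measurable ψ) (k : ℕ) :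
    ∫⁻ ω, (∏ i ∈ range k, φ (X i ω).1) * ψ (X k ω).2 ∂μ
      = (∫⁻ ω, φ (X 0 ω).1 ∂μ) ^ k * ∫⁻ ω, ψ (X 0 ω).2 ∂μ := by
  let g : ℕ → α × β → ℝ≥0∞ := fun i z ↦ if i < k then φ z.1 else ψ z.2
  have hg_fst : ∀ i ∈ range k, g i = fun z ↦ φ z.1 := fun i hi ↦ by simp [g, mem_range.1 hi]
  have hg_snd : g k = fun z ↦ ψ z.2 := by simp [g]
  have hg (i : ℕ) : Measurable (g i) := by
    by_cases h : i < k
    · rw [hg_fst i (mem_range.2 h)]; exact hφ.comp measurable_fst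
    · simp only [g, h, if_false]; exact hψ.comp measurable_snd
  have hfst (i : ℕ) : ∫⁻ ω, φ (X i ω).1 ∂μ = ∫⁻ ω, φ (X 0 ω).1 ∂μ :=
    ((hident i).comp (hφ.comp measurable_fst)).lintegral_eq
  have hsnd : ∫⁻ ω, ψ (X k ω).2 ∂μ = ∫⁻ ω, ψ (X 0 ω).2 ∂μ :=
    ((hident k).comp (hψ.comp measurable_snd)).lintegral_eq
  calc ∫⁻ ω, (∏ i ∈ range k, φ (X i ω).1) * ψ (X k ω).2 ∂μ
      = ∫⁻ ω, ∏ i ∈ range (k + 1), g i (X i ω) ∂μ := by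
        refine lintegral_congr fun ω ↦ ?_
        rw [prod_range_succ, hg_snd]
        exact congrArg (· * _) (prod_congr rfl fun i hi ↦ by rw [hg_fst i hi])
    _ = ∏ i ∈ range (k + 1), ∫⁻ ω, g i (X i ω) ∂μ :=
        lintegral_prod_eq_prod_lintegral_of_indepFun _ _ (hX.comp g hg) fun i ↦ (hg i).comp (hXm i)
    _ = (∏ i ∈ range k, ∫⁻ ω, φ (X i ω).1 ∂μ) * ∫⁻ ω, ψ (X k ω).2 ∂μ := by
        rw [prod_range_succ, hg_snd, prod_congr rfl fun i hi ↦ by rw [hg_fst i hi]]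
    _ = (∫⁻ ω, φ (X 0 ω).1 ∂μ) ^ k * ∫⁻ ω, ψ (X 0 ω).2 ∂μ := by
        rw [prod_congr rfl fun i _ ↦ hfst i, prod_const, card_range, hsnd]

section moments

variable {Ω : Type*} [MeasurableSpace Ω] {μ : Measure Ω} {q : ℕ}
  [MeasurableSpace (EuclideanSpace ℝ (Fin q) →L[ℝ] EuclideanSpace ℝ (Fin q))]
  [OpensMeasurableSpace (EuclideanSpace ℝ (Fin q) →L[ℝ] EuclideanSpace ℝ (Fin q))]
  {A : ℕ → Ω → (EuclideanSpace ℝ (Fin q) →L[ℝ] EuclideanSpace ℝ (Fin q))}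
  {B : ℕ → Ω → EuclideanSpace ℝ (Fin q)}

theorem lintegral_enorm_fwdProd_apply_rpow_le
    (hAmeas : ∀ k : ℕ, Measurable (A (k + 1))) (hBmeas : ∀ k : ℕ, Measurable (B (k + 1)))
    (hiid : iIndepFun (fun (k : ℕ) ω ↦ (A (k + 1) ω, B (k + 1) ω)) μ)
    (hident : ∀ k : ℕ, IdentDistrib (fun ω ↦ (A (k + 1) ω, B (k + 1) ω))
      (fun ω ↦ (A 1 ω, B 1 ω)) μ μ)
    {r : ℝ} (hr : 0 ≤ r) (k : ℕ) :
    ∫⁻ ω, ‖fwdProd A 1 k ω (B (k + 1) ω)‖ₑ ^ r ∂μ ≤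
      (∫⁻ ω, ‖A 1 ω‖ₑ ^ r ∂μ) ^ k * ∫⁻ ω, ‖B 1 ω‖ₑ ^ r ∂μ := by
  have hbound (ω : Ω) : ‖fwdProd A 1 k ω (B (k + 1) ω)‖ₑ ^ r ≤
      (∏ i ∈ range k, ‖A (i + 1) ω‖ₑ ^ r) * ‖B (k + 1) ω‖ₑ ^ r := by
    calc _ ≤ ((∏ i ∈ range k, ‖A (1 + i) ω‖ₑ) * ‖B (k + 1) ω‖ₑ) ^ r :=
          ENNReal.rpow_le_rpow (enorm_fwdProd_apply_le A 1 k ω _) hr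
      _ = _ := by
          simp_rw [ENNReal.mul_rpow_of_nonneg _ _ hr, ENNReal.prod_rpow_of_nonneg hr, add_comm 1]
  refine (lintegral_mono hbound).trans_eq ?_
  exact lintegral_prod_fst_mul_snd_of_iIndepFun_of_identDistrib
    (X := fun k ω ↦ (A (k + 1) ω, B (k + 1) ω)) hiid (fun k ↦ (hAmeas k).prodMk (hBmeas k))
    hident (measurable_enorm.pow_const r) (measurable_enorm.pow_const r) k

theorem eLpNorm_fwdProd_apply_le
    (hAmeas : ∀ k : ℕ, Measurable (A (k + 1))) (hBmeas : ∀ k : ℕ, Measurable (B (k + 1)))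
    (hiid : iIndepFun (fun (k : ℕ) ω ↦ (A (k + 1) ω, B (k + 1) ω)) μ)
    (hident : ∀ k : ℕ, IdentDistrib (fun ω ↦ (A (k + 1) ω, B (k + 1) ω))
      (fun ω ↦ (A 1 ω, B 1 ω)) μ μ)
    {p : ℝ≥0∞} (hp0 : p ≠ 0) (hp : p ≠ ∞) (k : ℕ) :
    eLpNorm (fun ω ↦ fwdProd A 1 k ω (B (k + 1) ω)) p μ ≤
      eLpNorm (A 1) p μ ^ k * eLpNorm (B 1) p μ := by
  have hr : 0 < p.toReal := ENNReal.toReal_pos hp0 hp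
  simp only [eLpNorm_eq_eLpNorm' hp0 hp]
  rw [← ENNReal.rpow_le_rpow_iff hr, ENNReal.mul_rpow_of_nonneg _ _ hr.le,
    ← ENNReal.rpow_natCast_mul, mul_comm (k : ℝ), ENNReal.rpow_mul_natCast,
    ← lintegral_rpow_enorm_eq_rpow_eLpNorm' hr, ← lintegral_rpow_enorm_eq_rpow_eLpNorm' hr,
    ← lintegral_rpow_enorm_eq_rpow_eLpNorm' hr]
  exact lintegral_enorm_fwdProd_apply_rpow_le hAmeas hBmeas hiid hident hr.le k

end moments

theorem backward_series_moments_general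
    {Ω : Type*} [MeasureSpace Ω]
    {q : ℕ}
    [MeasurableSpace (EuclideanSpace ℝ (Fin q) →L[ℝ] EuclideanSpace ℝ (Fin q))]
    [BorelSpace (EuclideanSpace ℝ (Fin q) →L[ℝ] EuclideanSpace ℝ (Fin q))]
    (A : ℕ → Ω → (EuclideanSpace ℝ (Fin q) →L[ℝ] EuclideanSpace ℝ (Fin q)))
    (B : ℕ → Ω → EuclideanSpace ℝ (Fin q))
    (hAmeas : ∀ k : ℕ, Measurable (A (k + 1)))
    (hBmeas : ∀ k : ℕ, Measurable (B (k + 1)))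
    (hiid : iIndepFun
      (fun (k : ℕ) ω => (A (k + 1) ω, B (k + 1) ω)) ℙ)
    (hident : ∀ k : ℕ, IdentDistrib (fun ω => (A (k + 1) ω, B (k + 1) ω))
      (fun ω => (A 1 ω, B 1 ω)) ℙ ℙ)
    (c : ℝ) (hc : 1 ≤ c)
    (hAc_int : Integrable (fun ω => ‖A 1 ω‖ ^ c) ℙ)
    (hAc_lt : ∫ ω, ‖A 1 ω‖ ^ c ∂ℙ < 1)
    (hBc_int : Integrable (fun ω => ‖B 1 ω‖ ^ c) ℙ) :
    (∀ᵐ ω ∂ℙ, Summable (fun k : ℕ => ‖(fwdProd A 1 k ω) (B (k + 1) ω)‖)) ∧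
      Integrable (fun ω => ‖∑' k : ℕ, (fwdProd A 1 k ω) (B (k + 1) ω)‖ ^ c) ℙ := by
  have hc0 : 0 < c := zero_lt_one.trans_le hc
  set p := ENNReal.ofReal c
  have hpc : p.toReal = c := ENNReal.toReal_ofReal hc0.le
  have hp0 : p ≠ 0 := ENNReal.ofReal_ne_zero_iff.2 hc0
  have hp : p ≠ ∞ := ENNReal.ofReal_ne_top
  have hp1 : Fact (1 ≤ p) := ⟨ENNReal.one_le_ofReal.2 hc⟩
  have hAp : MemLp (A 1) p ℙ :=
    (integrable_norm_rpow_iff (hAmeas 0).aestronglyMeasurable hp0 hp).1 (hpc ▸ hAc_int)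
  have hBp : MemLp (B 1) p ℙ :=
    (integrable_norm_rpow_iff (hBmeas 0).aestronglyMeasurable hp0 hp).1 (hpc ▸ hBc_int)
  have hA_lt : eLpNorm (A 1) p ℙ < 1 := by
    rw [hAp.eLpNorm_eq_integral_rpow_norm hp0 hp, hpc]
    exact ENNReal.ofReal_lt_one.2 <|
      Real.rpow_lt_one (integral_nonneg fun ω ↦ by positivity) hAc_lt (inv_pos.2 hc0)
  have hF (k : ℕ) : AEStronglyMeasurable (fun ω ↦ fwdProd A 1 k ω (B (k + 1) ω)) ℙ :=
    (isBoundedBilinearMap_apply.continuous.measurable.comp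
      ((measurable_fwdProd A (fun i ↦ add_comm i 1 ▸ hAmeas i) k).prodMk
        (hBmeas k))).aestronglyMeasurable
  have hsum : ∑' k, eLpNorm (fun ω ↦ fwdProd A 1 k ω (B (k + 1) ω)) p ℙ ≠ ∞ := by
    refine ne_top_of_le_ne_top ?_ (ENNReal.tsum_le_tsum fun k ↦
      eLpNorm_fwdProd_apply_le hAmeas hBmeas hiid hident hp0 hp k)
    rw [ENNReal.tsum_mul_right, ENNReal.tsum_geometric]
    exact ENNReal.mul_ne_top (ENNReal.inv_ne_top.2 (tsub_pos_of_lt hA_lt).ne') hBp.eLpNorm_ne_top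
  refine ⟨summable_norm_of_tsum_eLpNorm_ne_top hp1.out hF hsum, ?_⟩
  simpa only [hpc] using (memLp_tsum_of_tsum_eLpNorm_ne_top hF hsum).integrable_norm_rpow hp0 hp

/-- Moments of the backward series (abstract form of Lemma 4.1): if `c ≥ 1`,
`E[‖A₁‖^c] < 1` and `E[‖B₁‖^c] < ∞` for an i.i.d. sequence `((A_k, B_k))_{k≥1}`, then the
series `U = Σ_{k≥0} (A₁ ⋯ A_k) B_{k+1}` converges absolutely almost surely and
`E[‖U‖^c] < ∞`. -/
theorem backward_series_moments
    {Ω : Type*} [MeasureSpace Ω] [IsProbabilityMeasure (ℙ : Measure Ω)]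
    {q : ℕ} (hq : 1 ≤ q)
    [MeasurableSpace (EuclideanSpace ℝ (Fin q) →L[ℝ] EuclideanSpace ℝ (Fin q))]
    [BorelSpace (EuclideanSpace ℝ (Fin q) →L[ℝ] EuclideanSpace ℝ (Fin q))]
    (A : ℕ → Ω → (EuclideanSpace ℝ (Fin q) →L[ℝ] EuclideanSpace ℝ (Fin q)))
    (B : ℕ → Ω → EuclideanSpace ℝ (Fin q))
    (hAmeas : ∀ k : ℕ, Measurable (A (k + 1)))
    (hBmeas : ∀ k : ℕ, Measurable (B (k + 1)))
    (hiid : iIndepFun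
      (fun (k : ℕ) ω => (A (k + 1) ω, B (k + 1) ω)) ℙ)
    (hident : ∀ k : ℕ, IdentDistrib (fun ω => (A (k + 1) ω, B (k + 1) ω))
      (fun ω => (A 1 ω, B 1 ω)) ℙ ℙ)
    (c : ℝ) (hc : 1 ≤ c)
    (hAc_int : Integrable (fun ω => ‖A 1 ω‖ ^ c) ℙ)
    (hAc_lt : ∫ ω, ‖A 1 ω‖ ^ c ∂ℙ < 1)
    (hBc_int : Integrable (fun ω => ‖B 1 ω‖ ^ c) ℙ) :
    (∀ᵐ ω ∂ℙ, Summable (fun k : ℕ => ‖(fwdProd A 1 k ω) (B (k + 1) ω)‖)) ∧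
      Integrable (fun ω => ‖∑' k : ℕ, (fwdProd A 1 k ω) (B (k + 1) ω)‖ ^ c) ℙ :=
  backward_series_moments_general A B hAmeas hBmeas hiid hident c hc hAc_int hAc_lt hBc_int
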